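/- arXiv:2511.05386 — 2 statements merged into one kernel-verified Lean document; each statement's English description precedes it below -/
import Mathlib

section
/- For p > 0 and any nonnegative integer k, the 2k-th moment of the Ullman distribution equals 4^{-k} · binom(2k, k) · p/(p+2k). -/
open MeasureTheory

/-- The Ullman density: `ρ(x) = (p|x|^{p-1}/π) ∫_{|x|}^1 y^{-p}/√(1-y²) dy`. -/
noncomputable def ullmanDensity (p x : ℝ) : ℝ :=
  p * |x| ^ (p - 1) / Real.pi * ∫ y in |x|..1, y ^ (-p) / Real.sqrt (1 - y ^ 2)

/-!
The integrand is even, so the moment is twice the integral over `(0, 1)`. There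
`x^{2k} ρ(x) = (p/π) x^c ∫_x^1 y^{-p} (1-y²)^{-1/2} dy` with `c = 2k + p - 1 > -1`, and
exchanging the order of integration over `{0 < x < y < 1}` (Tonelli) turns this into
`(p/π) (p + 2k)⁻¹ W(2k)`, where `W(n) = ∫_0^1 y^n (1-y²)^{-1/2} dy`. Finally
`W(0) = arcsin 1 = π/2`, and integrating `d/dy (-y^{n+1} √(1-y²))` over `[0,1]` gives
`(n+2) W(n+2) = (n+1) W(n)`, whence `W(2k) = (π/2) C(2k,k)/4^k`.
-/

open Real Set intervalIntegral
open scoped ENNReal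

theorem integral_neg_eq_two_mul_of_even {f : ℝ → ℝ} (hf : ∀ x, f (-x) = f x) {a : ℝ}
    (ha : IntervalIntegrable f volume 0 a) :
    ∫ x in -a..a, f x = 2 * ∫ x in 0..a, f x := by
  have hneg : IntervalIntegrable f volume (-a) 0 := by
    simpa [hf] using ((IntervalIntegrable.iff_comp_neg (by finiteness)).1 ha).symm
  have hmirror : ∫ x in -a..0, f x = ∫ x in 0..a, f x := by
    simpa [hf] using (integral_comp_neg (a := 0) (b := a) f).symm
  rw [← integral_add_adjacent_intervals hneg ha, hmirror, two_mul]

lemma intervalIntegrable_one_div_sqrt_one_sub_sq {a b : ℝ} (ha : a ∈ Icc (-1) 1)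
    (hb : b ∈ Icc (-1) 1) :
    IntervalIntegrable (fun y : ℝ => 1 / √(1 - y ^ 2)) volume a b := by
  refine intervalIntegrable_deriv_of_nonneg continuous_arcsin.continuousOn
    (fun y hy => hasDerivAt_arcsin ?_ ?_) (fun y _ => by positivity)
  · exact ((le_min ha.1 hb.1).trans_lt hy.1).ne'
  · exact (hy.2.trans_le (max_le ha.2 hb.2)).ne

lemma IntervalIntegrable.div_sqrt_one_sub_sq {f : ℝ → ℝ} {a b : ℝ} (ha : a ∈ Icc (-1) 1)
    (hb : b ∈ Icc (-1) 1) (hf : ContinuousOn f (uIcc a b)) :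
    IntervalIntegrable (fun y => f y / √(1 - y ^ 2)) volume a b := by
  simpa only [mul_one_div] using
    (intervalIntegrable_one_div_sqrt_one_sub_sq ha hb).continuousOn_mul hf

lemma intervalIntegrable_pow_div_sqrt_one_sub_sq (n : ℕ) :
    IntervalIntegrable (fun y : ℝ => y ^ n / √(1 - y ^ 2)) volume 0 1 :=
  IntervalIntegrable.div_sqrt_one_sub_sq (by norm_num) (by norm_num) (continuousOn_pow n)

lemma integral_one_div_sqrt_one_sub_sq :
    ∫ y in (0:ℝ)..1, 1 / √(1 - y ^ 2) = π / 2 := by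
  rw [integral_eq_sub_of_hasDerivAt_of_le zero_le_one continuous_arcsin.continuousOn
    (fun y hy => hasDerivAt_arcsin (by linarith [hy.1]) hy.2.ne)
    (intervalIntegrable_one_div_sqrt_one_sub_sq (by norm_num) (by norm_num))]
  simp

lemma integral_pow_add_two_div_sqrt_one_sub_sq (n : ℕ) :
    (n + 2) * ∫ y in (0:ℝ)..1, y ^ (n + 2) / √(1 - y ^ 2)
      = (n + 1) * ∫ y in (0:ℝ)..1, y ^ n / √(1 - y ^ 2) := by
  have hderiv : ∀ y ∈ Ioo (0:ℝ) 1, HasDerivAt (fun y => -(y ^ (n + 1) * √(1 - y ^ 2)))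
      ((n + 2) * (y ^ (n + 2) / √(1 - y ^ 2)) - (n + 1) * (y ^ n / √(1 - y ^ 2))) y := by
    intro y hy
    have hpos : 0 < 1 - y ^ 2 := by nlinarith [hy.1, hy.2]
    have h : HasDerivAt (fun y => -(y ^ (n + 1) * √(1 - y ^ 2))) _ y :=
      ((hasDerivAt_pow (n + 1) y).mul ((hasDerivAt_pow 2 y).const_sub 1 |>.sqrt hpos.ne')).neg
    convert h using 1
    have hs : √(1 - y ^ 2) ^ 2 = 1 - y ^ 2 := sq_sqrt hpos.le
    field_simp
    push_cast
    linear_combination 2 * ((n:ℝ) + 1) * y ^ n * hs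
  have h := integral_eq_sub_of_hasDerivAt_of_le zero_le_one
    (by fun_prop) hderiv
    (((intervalIntegrable_pow_div_sqrt_one_sub_sq _).const_mul _).sub
      ((intervalIntegrable_pow_div_sqrt_one_sub_sq _).const_mul _))
  rw [integral_sub ((intervalIntegrable_pow_div_sqrt_one_sub_sq _).const_mul _)
      ((intervalIntegrable_pow_div_sqrt_one_sub_sq _).const_mul _),
    intervalIntegral.integral_const_mul, intervalIntegral.integral_const_mul] at h
  norm_num at h
  linarith

lemma integral_two_mul_pow_div_sqrt_one_sub_sq (k : ℕ) :
    ∫ y in (0:ℝ)..1, y ^ (2 * k) / √(1 - y ^ 2) = π / 2 * (k.centralBinom / 4 ^ k) := by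
  induction k with
  | zero => simpa using integral_one_div_sqrt_one_sub_sq
  | succ k ih =>
    have hrec := integral_pow_add_two_div_sqrt_one_sub_sq (2 * k)
    have hbinom : ((k + 1 : ℕ) : ℝ) * (k + 1).centralBinom = 2 * (2 * k + 1) * k.centralBinom := by
      exact_mod_cast k.succ_mul_centralBinom_succ
    rw [ih] at hrec
    rw [show 2 * (k + 1) = 2 * k + 2 by ring]
    push_cast at hrec hbinom
    field_simp at hrec ⊢
    rw [pow_succ]
    apply mul_left_cancel₀ (show (k:ℝ) + 1 ≠ 0 by positivity)
    linear_combination 2 * hrec - π * hbinom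

theorem lintegral_mul_setLIntegral_Ioi_eq (μ : Measure ℝ) [SFinite μ] {f g : ℝ → ℝ≥0∞}
    (hf : Measurable f) (hg : Measurable g) :
    ∫⁻ x, f x * ∫⁻ y in Ioi x, g y ∂μ ∂μ = ∫⁻ y, (∫⁻ x in Iio y, f x ∂μ) * g y ∂μ := by
  set F : ℝ → ℝ → ℝ≥0∞ := fun x y => if x < y then f x * g y else 0
  have hF : Measurable (Function.uncurry F) :=
    Measurable.ite (measurableSet_lt measurable_fst measurable_snd)
      ((hf.comp measurable_fst).mul (hg.comp measurable_snd)) measurable_const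
  calc ∫⁻ x, f x * ∫⁻ y in Ioi x, g y ∂μ ∂μ = ∫⁻ x, ∫⁻ y, F x y ∂μ ∂μ := by
        congr with x
        rw [← lintegral_const_mul _ hg, ← lintegral_indicator measurableSet_Ioi]
        congr with y
    _ = ∫⁻ y, ∫⁻ x, F x y ∂μ ∂μ := lintegral_lintegral_swap hF.aemeasurable
    _ = ∫⁻ y, (∫⁻ x in Iio y, f x ∂μ) * g y ∂μ := by
        congr with y
        rw [← lintegral_mul_const _ hf, ← lintegral_indicator measurableSet_Iio]
        congr with x

lemma setLIntegral_Ioo_rpow {c y : ℝ} (hc : -1 < c) (hy : 0 ≤ y) :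
    ∫⁻ x in Ioo 0 y, ENNReal.ofReal (x ^ c) = ENNReal.ofReal ((c + 1)⁻¹ * y ^ (c + 1)) := by
  have hint : IntegrableOn (fun x : ℝ => x ^ c) (Ioc 0 y) :=
    (intervalIntegrable_iff_integrableOn_Ioc_of_le hy).1 (intervalIntegrable_rpow' hc)
  rw [setLIntegral_congr Ioo_ae_eq_Ioc, ← ofReal_integral_eq_lintegral_ofReal hint
    (ae_restrict_of_forall_mem measurableSet_Ioc fun x hx => rpow_nonneg hx.1.le c),
    ← integral_of_le hy, integral_rpow (Or.inl hc), zero_rpow (by linarith), sub_zero,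
    div_eq_inv_mul]

lemma continuousOn_integral_of_intervalIntegrable {g : ℝ → ℝ} {a b : ℝ}
    (hg : ∀ x ∈ Ioo a b, IntervalIntegrable g volume x b) :
    ContinuousOn (fun x => ∫ y in x..b, g y) (Ioo a b) := by
  intro x hx
  obtain ⟨c, hac, hcx⟩ := exists_between hx.1
  have hcont := continuousOn_primitive_interval_left
    ((intervalIntegrable_iff' (by finiteness)).1 (hg c ⟨hac, hcx.trans hx.2⟩))
  rw [uIcc_of_le (hcx.trans hx.2).le] at hcont
  exact ((hcont x ⟨hcx.le, hx.2.le⟩).continuousAt (Icc_mem_nhds hcx hx.2)).continuousWithinAt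

lemma setLIntegral_Ioo_rpow_mul_integral {g : ℝ → ℝ} {c : ℝ} (hc : -1 < c) (hg : Measurable g)
    (hg_nonneg : ∀ y ∈ Ioo (0:ℝ) 1, 0 ≤ g y)
    (hg_int : ∀ x ∈ Ioo (0:ℝ) 1, IntervalIntegrable g volume x 1) :
    ∫⁻ x in Ioo 0 1, ENNReal.ofReal (x ^ c * ∫ y in x..1, g y)
      = ∫⁻ y in Ioo 0 1, ENNReal.ofReal ((c + 1)⁻¹ * (y ^ (c + 1) * g y)) := by
  set μ := volume.restrict (Ioo (0:ℝ) 1)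
  have hlhs : ∀ x ∈ Ioo (0:ℝ) 1, ENNReal.ofReal (x ^ c * ∫ y in x..1, g y)
      = ENNReal.ofReal (x ^ c) * ∫⁻ y in Ioi x, ENNReal.ofReal (g y) ∂μ := by
    intro x hx
    have hint := (intervalIntegrable_iff_integrableOn_Ioo_of_le hx.2.le).1 (hg_int x hx)
    rw [Measure.restrict_restrict measurableSet_Ioi, Ioi_inter_Ioo, max_eq_left hx.1.le,
      ENNReal.ofReal_mul (rpow_nonneg hx.1.le c), integral_of_le hx.2.le,
      integral_Ioc_eq_integral_Ioo, ofReal_integral_eq_lintegral_ofReal hint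
        (ae_restrict_of_forall_mem measurableSet_Ioo fun y hy =>
          hg_nonneg y ⟨hx.1.trans hy.1, hy.2⟩)]
  have hrhs : ∀ y ∈ Ioo (0:ℝ) 1, (∫⁻ x in Iio y, ENNReal.ofReal (x ^ c) ∂μ) * ENNReal.ofReal (g y)
      = ENNReal.ofReal ((c + 1)⁻¹ * (y ^ (c + 1) * g y)) := by
    intro y hy
    rw [Measure.restrict_restrict measurableSet_Iio, Iio_inter_Ioo, min_eq_left hy.2.le,
      setLIntegral_Ioo_rpow hc hy.1.le, ← ENNReal.ofReal_mul, mul_assoc]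
    exact mul_nonneg (inv_nonneg.2 (by linarith)) (rpow_nonneg hy.1.le _)
  rw [setLIntegral_congr_fun measurableSet_Ioo hlhs, lintegral_mul_setLIntegral_Ioi_eq μ
    (by fun_prop) hg.ennreal_ofReal, setLIntegral_congr_fun measurableSet_Ioo hrhs]

lemma integrable_and_integral_eq_of_lintegral_ofReal_eq {α : Type*} [MeasurableSpace α]
    {μ : Measure α} {f : α → ℝ} {r : ℝ} (hf : AEStronglyMeasurable f μ) (hf0 : 0 ≤ᵐ[μ] f)
    (hr : 0 ≤ r) (h : ∫⁻ x, ENNReal.ofReal (f x) ∂μ = ENNReal.ofReal r) :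
    Integrable f μ ∧ ∫ x, f x ∂μ = r :=
  ⟨⟨hf, (hasFiniteIntegral_iff_ofReal hf0).2 (h ▸ ENNReal.ofReal_lt_top)⟩, by
    rw [integral_eq_lintegral_of_nonneg_ae hf0 hf, h, ENNReal.toReal_ofReal hr]⟩

theorem intervalIntegrable_and_integral_rpow_mul_integral_eq {g : ℝ → ℝ} {c : ℝ} (hc : -1 < c)
    (hg : Measurable g) (hg_nonneg : ∀ y ∈ Ioo (0:ℝ) 1, 0 ≤ g y)
    (hg_int : ∀ x ∈ Ioo (0:ℝ) 1, IntervalIntegrable g volume x 1)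
    (hg_mom : IntervalIntegrable (fun y => y ^ (c + 1) * g y) volume 0 1) :
    IntervalIntegrable (fun x => x ^ c * ∫ y in x..1, g y) volume 0 1 ∧
      ∫ x in 0..1, x ^ c * ∫ y in x..1, g y = (c + 1)⁻¹ * ∫ y in 0..1, y ^ (c + 1) * g y := by
  rw [intervalIntegrable_iff_integrableOn_Ioo_of_le zero_le_one] at hg_mom ⊢
  simp only [integral_of_le zero_le_one, integral_Ioc_eq_integral_Ioo]
  have hmom_nonneg : ∀ y ∈ Ioo (0:ℝ) 1, 0 ≤ y ^ (c + 1) * g y := fun y hy =>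
    mul_nonneg (rpow_nonneg hy.1.le _) (hg_nonneg y hy)
  have hlin : ∫⁻ y in Ioo 0 1, ENNReal.ofReal ((c + 1)⁻¹ * (y ^ (c + 1) * g y))
      = ENNReal.ofReal ((c + 1)⁻¹ * ∫ y in Ioo 0 1, y ^ (c + 1) * g y) := by
    rw [← MeasureTheory.integral_const_mul, ofReal_integral_eq_lintegral_ofReal (hg_mom.const_mul _)
      (ae_restrict_of_forall_mem measurableSet_Ioo fun y hy =>
        mul_nonneg (inv_nonneg.2 (by linarith)) (hmom_nonneg y hy))]
  have hmeas : AEStronglyMeasurable (fun x => x ^ c * ∫ y in x..1, g y)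
      (volume.restrict (Ioo 0 1)) :=
    ((continuousOn_id.rpow_const fun x hx => Or.inl hx.1.ne').mul
      (continuousOn_integral_of_intervalIntegrable hg_int)).aestronglyMeasurable measurableSet_Ioo
  exact integrable_and_integral_eq_of_lintegral_ofReal_eq hmeas
    (ae_restrict_of_forall_mem measurableSet_Ioo fun x hx => mul_nonneg (rpow_nonneg hx.1.le _) (by
      rw [integral_of_le hx.2.le, integral_Ioc_eq_integral_Ioo]
      exact setIntegral_nonneg measurableSet_Ioo fun y hy => hg_nonneg y ⟨hx.1.trans hy.1, hy.2⟩))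
    (mul_nonneg (inv_nonneg.2 (by linarith)) (setIntegral_nonneg measurableSet_Ioo hmom_nonneg))
    ((setLIntegral_Ioo_rpow_mul_integral hc hg hg_nonneg hg_int).trans hlin)

lemma ullmanDensity_neg (p x : ℝ) : ullmanDensity p (-x) = ullmanDensity p x := by
  simp only [ullmanDensity, abs_neg]

lemma pow_mul_ullmanDensity_of_pos {p x : ℝ} (hx : 0 < x) (k : ℕ) :
    x ^ (2 * k) * ullmanDensity p x
      = p / π * (x ^ (2 * k + p - 1) * ∫ y in x..1, y ^ (-p) / √(1 - y ^ 2)) := by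
  rw [ullmanDensity, abs_of_pos hx,
    show (2 * k + p - 1 : ℝ) = (2 * k : ℕ) + (p - 1) by push_cast; ring, rpow_add hx, rpow_natCast]
  ring

theorem intervalIntegrable_and_integral_pow_mul_ullmanDensity {p : ℝ} (hp : 0 < p) (k : ℕ) :
    IntervalIntegrable (fun x => x ^ (2 * k) * ullmanDensity p x) volume 0 1 ∧
      ∫ x in 0..1, x ^ (2 * k) * ullmanDensity p x
        = p / π * ((p + 2 * k)⁻¹ * ∫ y in 0..1, y ^ (2 * k) / √(1 - y ^ 2)) := by
  have h01 : uIoo (0:ℝ) 1 = Ioo 0 1 := uIoo_of_le zero_le_one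
  have hmom : EqOn (fun y => y ^ ((2 * k + p - 1) + 1) * (y ^ (-p) / √(1 - y ^ 2)))
      (fun y => y ^ (2 * k) / √(1 - y ^ 2)) (uIoo 0 1) := by
    intro y hy
    rw [h01] at hy
    dsimp only
    rw [← mul_div_assoc, ← rpow_add hy.1, sub_add_cancel, add_neg_cancel_right,
      ← Nat.cast_ofNat, ← Nat.cast_mul, rpow_natCast]
  have hf : EqOn (fun x => p / π * (x ^ (2 * k + p - 1) * ∫ y in x..1, y ^ (-p) / √(1 - y ^ 2)))
      (fun x => x ^ (2 * k) * ullmanDensity p x) (uIoo 0 1) := by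
    intro x hx
    rw [h01] at hx
    exact (pow_mul_ullmanDensity_of_pos hx.1 k).symm
  obtain ⟨hint, hval⟩ := intervalIntegrable_and_integral_rpow_mul_integral_eq
    (c := 2 * k + p - 1) (g := fun y => y ^ (-p) / √(1 - y ^ 2))
    (by linarith [(k.cast_nonneg : (0:ℝ) ≤ k)])
    (by fun_prop) (fun y hy => div_nonneg (rpow_nonneg hy.1.le _) (sqrt_nonneg _))
    (fun x hx => IntervalIntegrable.div_sqrt_one_sub_sq ⟨by linarith [hx.1], hx.2.le⟩ (by norm_num)
      (continuousOn_id.rpow_const fun y hy =>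
        Or.inl (hx.1.trans_le (uIcc_of_le hx.2.le ▸ hy).1).ne'))
    ((intervalIntegrable_pow_div_sqrt_one_sub_sq (2 * k)).congr_uIoo hmom.symm)
  refine ⟨(hint.const_mul _).congr_uIoo hf, ?_⟩
  rw [← integral_congr_uIoo hf, intervalIntegral.integral_const_mul, hval, integral_congr_uIoo hmom]
  ring

/-- The `2k`-th moment of the Ullman distribution equals `4^{-k}·C(2k,k)·p/(p+2k)`. -/
theorem stmt1 (p : ℝ) (hp : 0 < p) (k : ℕ) :
    ∫ x in (-1:ℝ)..1, x ^ (2 * k) * ullmanDensity p x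
      = (Nat.choose (2 * k) k : ℝ) / 4 ^ k * (p / (p + 2 * k)) := by
  obtain ⟨hint, hval⟩ := intervalIntegrable_and_integral_pow_mul_ullmanDensity hp k
  have heven (x : ℝ) : (-x) ^ (2 * k) * ullmanDensity p (-x) = x ^ (2 * k) * ullmanDensity p x := by
    rw [ullmanDensity_neg, Even.neg_pow (even_two_mul k)]
  rw [integral_neg_eq_two_mul_of_even heven hint, hval, integral_two_mul_pow_div_sqrt_one_sub_sq,
    Nat.centralBinom_eq_two_mul_choose]
  field_simp
end

section
/- Let p > 2 and g(x) = p c_p |x|^p. There exists C > 0 such that for all real t, λ: |g'(t) − g'(λ) − (t−λ) g''(λ)| ≤ C |t−λ|² (max(|λ|,|t|))^{p−3}, and |g''(t) − g''(λ)| ≤ C |t−λ| (max(|λ|,|t|))^{p−3}. -/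
/-!
With `q = p - 2` one has `g' x = p² c_p |x|^q x` and `g'' x = p² c_p (p - 1) |x|^q`. Both estimates
reduce to the Hölder-type bound `||s|^q - |λ|^q| ≤ 2 max(q, 1) |t - λ| M^(q-1)` for `s` between `λ`
and `t`, where `M = max(|λ|, |t|)`: the second one is the case `s = t`, and the first one follows
by the mean value theorem applied to `x ↦ |x|^q x - x g''(λ)`.

The bound comes from `a^q - b^q ≤ max(q, 1) (a - b) a^(q-1)` for `0 ≤ b ≤ a` (Bernoulli's inequality
if `q ≥ 1`, and `b^(q-1) ≥ a^(q-1)` if `q ≤ 1`). For `q < 1` the factor `max(|s|, |λ|)^(q-1)` is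
comparable to `M^(q-1)` only when `|λ| ≥ M / 2`; otherwise `|t - λ| ≥ M / 2` and the crude bound
`M^q` suffices.
-/

/-- `g(x) = p · c_p · |x|^p`. -/
noncomputable def gfun (p c : ℝ) : ℝ → ℝ := fun x => p * c * |x| ^ p

open Real Set Asymptotics Topology

namespace Real

lemma rpow_sub_rpow_le {q a b : ℝ} (hq : 0 < q) (hb : 0 ≤ b) (hba : b ≤ a) :
    a ^ q - b ^ q ≤ max q 1 * (a - b) * a ^ (q - 1) := by
  obtain rfl | ha := (hb.trans hba).eq_or_lt
  · obtain rfl : b = 0 := le_antisymm hba hb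
    simp
  have hsplit : a ^ q = a * a ^ (q - 1) := by
    rw [← rpow_one_add' ha.le (by linarith), add_sub_cancel]
  rcases le_total q 1 with hq1 | hq1
  · have hb_le : b * a ^ (q - 1) ≤ b ^ q := by
      obtain rfl | hb := hb.eq_or_lt
      · simp [zero_rpow hq.ne']
      calc b * a ^ (q - 1) ≤ b * b ^ (q - 1) :=
            mul_le_mul_of_nonneg_left (rpow_le_rpow_of_nonpos hb hba (by linarith)) hb.le
        _ = b ^ q := by rw [← rpow_one_add' hb.le (by linarith), add_sub_cancel]
    rw [max_eq_right hq1]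
    linarith
  · have hbern := one_add_mul_self_le_rpow_one_add (show -1 ≤ b / a - 1 by
      have := div_nonneg hb ha.le; linarith) hq1
    rw [add_sub_cancel, div_rpow hb ha.le, le_div_iff₀ (rpow_pos_of_pos ha q)] at hbern
    have : (1 + q * (b / a - 1)) * a ^ q = a ^ q - q * (a - b) * a ^ (q - 1) := by
      rw [hsplit]; field_simp; ring
    rw [max_eq_left hq1]
    linarith

lemma abs_rpow_sub_abs_rpow_le {q : ℝ} (hq : 0 < q) (x y : ℝ) :
    |(|x| ^ q - |y| ^ q)| ≤ max q 1 * |x - y| * max |x| |y| ^ (q - 1) := by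
  wlog hyx : |y| ≤ |x| generalizing x y
  · rw [abs_sub_comm, abs_sub_comm x, max_comm |x|]
    exact this y x (le_of_not_ge hyx)
  rw [abs_of_nonneg (sub_nonneg.2 (rpow_le_rpow (abs_nonneg y) hyx hq.le)), max_eq_left hyx]
  calc |x| ^ q - |y| ^ q ≤ max q 1 * (|x| - |y|) * |x| ^ (q - 1) :=
        rpow_sub_rpow_le hq (abs_nonneg y) hyx
    _ ≤ max q 1 * |x - y| * |x| ^ (q - 1) := by
        gcongr
        exact abs_sub_abs_le_abs_sub x y

lemma rpow_le_two_mul_rpow {r m M : ℝ} (hr : -1 ≤ r) (hM : 0 < M) (hMm : M ≤ 2 * m)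
    (hmM : m ≤ M) : m ^ r ≤ 2 * M ^ r := by
  have hm : 0 < m := by linarith
  rcases le_total 0 r with hr0 | hr0
  · linarith [rpow_le_rpow hm.le hmM hr0, rpow_pos_of_pos hM r]
  calc m ^ r ≤ (M / 2) ^ r := rpow_le_rpow_of_nonpos (by positivity) (by linarith) hr0
    _ = 2 ^ (-r) * M ^ r := by
        rw [div_rpow hM.le zero_le_two, rpow_neg zero_le_two]; ring
    _ ≤ 2 ^ (1 : ℝ) * M ^ r := by
        gcongr
        · exact one_le_two
        · linarith
    _ = 2 * M ^ r := by rw [rpow_one]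

lemma abs_rpow_sub_abs_rpow_le_of_mem_uIcc {q a b s : ℝ} (hq : 0 < q) (hs : s ∈ uIcc a b) :
    |(|s| ^ q - |a| ^ q)| ≤ 2 * max q 1 * |b - a| * max |a| |b| ^ (q - 1) := by
  set M := max |a| |b|
  have hM : 0 ≤ M := (abs_nonneg a).trans (le_max_left _ _)
  have hsM : |s| ≤ M := by
    rcases mem_uIcc.1 hs with ⟨has, hsb⟩ | ⟨hbs, hsa⟩
    · exact abs_le_max_abs_abs has hsb
    · exact (abs_le_max_abs_abs hbs hsa).trans_eq (max_comm _ _)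
  have hq1 : 1 ≤ max q 1 := le_max_right q 1
  have hMq1 : 0 ≤ M ^ (q - 1) := rpow_nonneg hM (q - 1)
  by_cases hfar : M ≤ 2 * |b - a|
  · have hsq : |(|s| ^ q - |a| ^ q)| ≤ M ^ q := by
      have := rpow_le_rpow (abs_nonneg s) hsM hq.le
      have := rpow_le_rpow (abs_nonneg a) (le_max_left |a| |b|) hq.le
      have := rpow_nonneg (abs_nonneg s) q
      have := rpow_nonneg (abs_nonneg a) q
      rw [abs_sub_le_iff]; constructor <;> linarith
    calc |(|s| ^ q - |a| ^ q)| ≤ M * M ^ (q - 1) := by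
          rwa [← rpow_one_add' hM (by linarith), add_sub_cancel]
      _ ≤ 2 * |b - a| * M ^ (q - 1) := mul_le_mul_of_nonneg_right hfar hMq1
      _ ≤ 2 * max q 1 * |b - a| * M ^ (q - 1) := by
          have := mul_nonneg (abs_nonneg (b - a)) hMq1
          nlinarith
  · have hMa : M ≤ 2 * max |s| |a| := by
      have := abs_sub_abs_le_abs_sub b a
      have := le_max_right |s| |a|
      rcases le_total |a| |b| with h | h
      · rw [show M = |b| from max_eq_right h] at hfar ⊢; linarith
      · rw [show M = |a| from max_eq_left h]; linarith [abs_nonneg a]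
    have hbase : max |s| |a| ^ (q - 1) ≤ 2 * M ^ (q - 1) :=
      rpow_le_two_mul_rpow (by linarith) (by linarith [abs_nonneg (b - a)]) hMa
        (max_le hsM (le_max_left _ _))
    calc |(|s| ^ q - |a| ^ q)| ≤ max q 1 * |s - a| * max |s| |a| ^ (q - 1) :=
          abs_rpow_sub_abs_rpow_le hq s a
      _ ≤ max q 1 * |b - a| * (2 * M ^ (q - 1)) :=
          mul_le_mul (mul_le_mul_of_nonneg_left (abs_sub_left_of_mem_uIcc hs) (by linarith))
            hbase (rpow_nonneg (le_max_of_le_left (abs_nonneg s)) _) (by positivity)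
      _ = 2 * max q 1 * |b - a| * M ^ (q - 1) := by ring

end Real

lemma hasDerivAt_abs_rpow_mul_self {q : ℝ} (hq : 0 < q) (x : ℝ) :
    HasDerivAt (fun y ↦ |y| ^ q * y) ((q + 1) * |x| ^ q) x := by
  obtain rfl | hx := eq_or_ne x 0
  · rw [abs_zero, zero_rpow hq.ne', mul_zero, hasDerivAt_iff_isLittleO]
    have hsmall : (fun y : ℝ ↦ |y| ^ q) =o[𝓝 0] fun _ ↦ (1 : ℝ) := by
      rw [isLittleO_one_iff]
      simpa [zero_rpow hq.ne'] using
        ((continuous_abs.rpow_const fun _ ↦ Or.inr hq.le).tendsto 0)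
    simpa [mul_comm] using (isBigO_refl (fun y : ℝ ↦ y) (𝓝 0)).mul_isLittleO hsmall
  · refine (((hasDerivAt_abs hx).rpow_const (p := q) (Or.inl (abs_ne_zero.2 hx))).mul
      (hasDerivAt_id' x)).congr_deriv ?_
    have hpow : |x| ^ (q - 1) * |x| = |x| ^ q := by
      rw [← rpow_add_one (abs_ne_zero.2 hx), sub_add_cancel]
    calc (SignType.sign x : ℝ) * q * |x| ^ (q - 1) * x + |x| ^ q * 1
        = q * (|x| ^ (q - 1) * ((SignType.sign x : ℝ) * x)) + |x| ^ q := by ring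
      _ = (q + 1) * |x| ^ q := by rw [sign_mul_self, hpow]; ring

lemma abs_sub_sub_mul_le_of_hasDerivAt {f f' : ℝ → ℝ} {a b B : ℝ}
    (hf : ∀ x ∈ uIcc a b, HasDerivAt f (f' x) x) (hB : ∀ x ∈ uIcc a b, |f' x - f' a| ≤ B) :
    |f b - f a - (b - a) * f' a| ≤ B * |b - a| := by
  have hmvt := (convex_uIcc a b).norm_image_sub_le_of_norm_hasDerivWithin_le
    (f := fun x ↦ f x - x * f' a)
    (fun x hx ↦ ((hf x hx).sub (hasDerivAt_mul_const (f' a))).hasDerivWithinAt) hB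
    left_mem_uIcc right_mem_uIcc
  simp only [Real.norm_eq_abs] at hmvt
  calc |f b - f a - (b - a) * f' a| = |f b - b * f' a - (f a - a * f' a)| := by ring_nf
    _ ≤ B * |b - a| := hmvt

lemma deriv_gfun {p : ℝ} (hp : 1 < p) (c : ℝ) :
    deriv (gfun p c) = fun x ↦ p * c * p * (|x| ^ (p - 2) * x) := by
  funext x
  exact ((hasDerivAt_abs_rpow x hp).const_mul (p * c)).deriv.trans (by ring)

lemma deriv_deriv_gfun {p : ℝ} (hp : 2 < p) (c : ℝ) :
    deriv (deriv (gfun p c)) = fun x ↦ p * c * p * ((p - 1) * |x| ^ (p - 2)) := by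
  funext x
  rw [deriv_gfun (by linarith)]
  exact ((hasDerivAt_abs_rpow_mul_self (sub_pos.2 hp) x).const_mul (p * c * p)).deriv.trans
    (by ring)

lemma abs_abs_rpow_mul_self_sub_sub_le {q : ℝ} (hq : 0 < q) (a b : ℝ) :
    |(|b| ^ q * b - |a| ^ q * a - (b - a) * ((q + 1) * |a| ^ q))|
      ≤ (q + 1) * (2 * max q 1) * |b - a| ^ 2 * max |a| |b| ^ (q - 1) := by
  have hq1 : 0 < q + 1 := by linarith
  have hB : ∀ s ∈ uIcc a b, |(q + 1) * |s| ^ q - (q + 1) * |a| ^ q|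
      ≤ (q + 1) * (2 * max q 1 * |b - a| * max |a| |b| ^ (q - 1)) := fun s hs ↦ by
    rw [← mul_sub, abs_mul, abs_of_pos hq1]
    exact mul_le_mul_of_nonneg_left (abs_rpow_sub_abs_rpow_le_of_mem_uIcc hq hs) hq1.le
  calc _ ≤ _ := abs_sub_sub_mul_le_of_hasDerivAt
          (fun x _ ↦ hasDerivAt_abs_rpow_mul_self hq x) hB
    _ = (q + 1) * (2 * max q 1) * |b - a| ^ 2 * max |a| |b| ^ (q - 1) := by ring

/-- Improved Taylor remainder bounds for `g'` and `g''`, where `g(x) = p c_p |x|^p`, `p > 2`: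
there is `C > 0` such that for all real `t, λ`,
`|g'(t) − g'(λ) − (t−λ)g''(λ)| ≤ C|t−λ|² (max(|λ|,|t|))^{p−3}` and
`|g''(t) − g''(λ)| ≤ C|t−λ| (max(|λ|,|t|))^{p−3}`. -/
theorem stmt4 (p c : ℝ) (hp : 2 < p) (hc : 0 < c) :
    ∃ C > 0, ∀ t lam : ℝ,
      |deriv (gfun p c) t - deriv (gfun p c) lam
          - (t - lam) * deriv (deriv (gfun p c)) lam|
        ≤ C * |t - lam| ^ 2 * (max |lam| |t|) ^ (p - 3) ∧
      |deriv (deriv (gfun p c)) t - deriv (deriv (gfun p c)) lam|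
        ≤ C * |t - lam| * (max |lam| |t|) ^ (p - 3) := by
  have hq : 0 < p - 2 := by linarith
  have hA : 0 < p * c * p := by positivity
  have hA' : 0 < p * c * p * (p - 1) := mul_pos hA (by linarith)
  have hexp : p - 2 - 1 = p - 3 := by ring
  refine ⟨p * c * p * (p - 1) * (2 * max (p - 2) 1), mul_pos hA' (by positivity), fun t lam ↦ ⟨?_, ?_⟩⟩
  · have h := abs_abs_rpow_mul_self_sub_sub_le hq lam t
    rw [show p - 2 + 1 = p - 1 by ring, hexp] at h
    calc _ = |p * c * p * (|t| ^ (p - 2) * t - |lam| ^ (p - 2) * lam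
            - (t - lam) * ((p - 1) * |lam| ^ (p - 2)))| := by
          rw [deriv_deriv_gfun hp, deriv_gfun (by linarith)]
          congr 1
          ring
      _ ≤ p * c * p *
          ((p - 1) * (2 * max (p - 2) 1) * |t - lam| ^ 2 * max |lam| |t| ^ (p - 3)) := by
          rw [abs_mul, abs_of_pos hA]
          exact mul_le_mul_of_nonneg_left h hA.le
      _ = _ := by ring
  · have h := abs_rpow_sub_abs_rpow_le_of_mem_uIcc hq (right_mem_uIcc (a := lam) (b := t))
    rw [hexp] at h
    calc _ = |p * c * p * (p - 1) * (|t| ^ (p - 2) - |lam| ^ (p - 2))| := by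
          rw [deriv_deriv_gfun hp]
          congr 1
          ring
      _ ≤ p * c * p * (p - 1) * (2 * max (p - 2) 1 * |t - lam| * max |lam| |t| ^ (p - 3)) := by
          rw [abs_mul, abs_of_pos hA']
          exact mul_le_mul_of_nonneg_left h hA'.le
      _ = _ := by ring
end
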